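/- Let Γ_• = (Γ_1 ⇉ Γ_0) be a Lie groupoid whose differentiable cohomology vanishes in positive degrees (e.g. a proper Lie groupoid, in particular an action groupoid of a compact Lie group). Then the projection (c,h,ω) ↦ c induces an isomorphism from the second total cohomology of the double complex DC_1^•(Γ_•) to the second total cohomology H^2(Γ_•, ℤ) of the double complex of smooth singular integer cochains C_ℤ^•(Γ_•). -/

import Mathlib

open Manifold Finset
noncomputable section

/-- The `i`-th face embedding of the standard `n`-simplex into the standard `n+1`-simplex,
as a linear map (insertion of `0` at the `i`-th vertex coordinate). -/
def faceLM (n : ℕ) (i : Fin (n + 2)) : (Fin (n + 1) → ℝ) →ₗ[ℝ] (Fin (n + 2) → ℝ) where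
  toFun x j := ∑ k, if i.succAbove k = j then x k else 0
  map_add' x y := by
    funext j
    show (∑ k, if i.succAbove k = j then (x k + y k) else 0) =
      (∑ k, if i.succAbove k = j then x k else 0) + (∑ k, if i.succAbove k = j then y k else 0)
    rw [← Finset.sum_add_distrib]
    exact Finset.sum_congr rfl fun k _ => by split <;> simp
  map_smul' c x := by
    funext j
    show (∑ k, if i.succAbove k = j then (c * x k) else 0) =
      c * ∑ k, if i.succAbove k = j then x k else 0
    rw [Finset.mul_sum]
    exact Finset.sum_congr rfl fun k _ => by split <;> simp

lemma faceLM_apply (n : ℕ) (i : Fin (n + 2)) (x : Fin (n + 1) → ℝ) (j : Fin (n + 2)) :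
    faceLM n i x j = ∑ k, if i.succAbove k = j then x k else 0 := rfl

lemma faceLM_mapsTo (n : ℕ) (i : Fin (n + 2)) :
    Set.MapsTo (faceLM n i) (stdSimplex ℝ (Fin (n + 1))) (stdSimplex ℝ (Fin (n + 2))) := by
  intro x hx
  obtain ⟨hx0, hx1⟩ := hx
  constructor
  · intro j
    rw [faceLM_apply]
    refine Finset.sum_nonneg fun k _ => ?_
    split
    · exact hx0 k
    · exact le_refl 0
  · calc ∑ j, faceLM n i x j
        = ∑ j, ∑ k, (if i.succAbove k = j then x k else 0) :=
          Finset.sum_congr rfl fun j _ => faceLM_apply n i x j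
      _ = ∑ k, ∑ j, (if i.succAbove k = j then x k else 0) := Finset.sum_comm
      _ = ∑ k, x k := Finset.sum_congr rfl fun k _ => by simp [Finset.sum_ite_eq]
      _ = 1 := hx1

variable {E : Type} [NormedAddCommGroup E] [NormedSpace ℝ E]
  {H : Type} [TopologicalSpace H] (I : ModelWithCorners ℝ E H)
  (M : Type) [TopologicalSpace M] [ChartedSpace H M]

/-- A smooth singular `n`-simplex in a manifold `M`. -/
structure SSimplex (n : ℕ) where
  toFun : (Fin (n + 1) → ℝ) → M
  smooth : ContMDiffOn 𝓘(ℝ, Fin (n + 1) → ℝ) I (⊤ : ℕ∞) toFun (stdSimplex ℝ (Fin (n + 1)))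

variable {I M}

/-- The `i`-th face of a smooth singular simplex. -/
def SSimplex.face {n : ℕ} (σ : SSimplex I M (n + 1)) (i : Fin (n + 2)) : SSimplex I M n where
  toFun := σ.toFun ∘ (faceLM n i)
  smooth := by
    have h1 : ContMDiff 𝓘(ℝ, Fin (n+1) → ℝ) 𝓘(ℝ, Fin (n+2) → ℝ) (⊤ : ℕ∞) ⇑(faceLM n i) := by
      rw [← LinearMap.coe_toContinuousLinearMap' (faceLM n i)]
      exact (ContinuousLinearMap.contDiff _).contMDiff
    exact σ.smooth.comp h1.contMDiffOn (faceLM_mapsTo n i)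

variable (I M)

/-- Smooth singular chains. -/
def SChain (n : ℕ) : Type := FreeAbelianGroup (SSimplex I M n)

instance (n : ℕ) : AddCommGroup (SChain I M n) :=
  inferInstanceAs (AddCommGroup (FreeAbelianGroup (SSimplex I M n)))

/-- The boundary operator on smooth singular chains. -/
def sbd (n : ℕ) : SChain I M (n + 1) →+ SChain I M n :=
  ∑ i : Fin (n + 2), (-1 : ℤ) ^ (i : ℕ) • FreeAbelianGroup.map (fun σ => σ.face i)

variable (R : Type) [AddCommGroup R]

/-- Smooth singular cochains with coefficients in `R`. -/
def SCochain (n : ℕ) : Type := SSimplex I M n → R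

instance (n : ℕ) : AddCommGroup (SCochain I M R n) :=
  inferInstanceAs (AddCommGroup (SSimplex I M n → R))

/-- The coboundary on smooth singular cochains. -/
def scd (n : ℕ) : SCochain I M R n →+ SCochain I M R (n + 1) :=
  AddMonoidHom.mk' (fun c σ => ∑ i : Fin (n + 2), (-1 : ℤ) ^ (i : ℕ) • c (σ.face i))
    (by
      intro c c'
      funext σ
      show ∑ i : Fin (n + 2), (-1 : ℤ) ^ (i : ℕ) • (c (σ.face i) + c' (σ.face i)) =
        (∑ i : Fin (n + 2), (-1 : ℤ) ^ (i : ℕ) • c (σ.face i)) +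
          ∑ i : Fin (n + 2), (-1 : ℤ) ^ (i : ℕ) • c' (σ.face i)
      simp [smul_add, Finset.sum_add_distrib])

/-- Pairing of a cochain with a chain (evaluation / integration). -/
def pairC {n : ℕ} (c : SCochain I M R n) : SChain I M n →+ R :=
  FreeAbelianGroup.lift c

lemma pairC_add {n : ℕ} (c c' : SCochain I M R n) (x : SChain I M n) :
    pairC I M R (c + c') x = pairC I M R c x + pairC I M R c' x := by
  show FreeAbelianGroup.lift (c + c' : SSimplex I M n → R) x = FreeAbelianGroup.lift c x + FreeAbelianGroup.lift c' x
  refine FreeAbelianGroup.induction_on x (by simp) (fun σ => ?_) (fun y hy => ?_) ?_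
  · exact (FreeAbelianGroup.lift_apply_of (c + c') σ).trans
      (congrArg₂ (· + ·) (FreeAbelianGroup.lift_apply_of c σ)
        (FreeAbelianGroup.lift_apply_of c' σ)).symm
  · simp only [map_neg, hy]; abel
  · intro y z hy hz
    simp only [map_add, hy, hz]; abel

/-- The coefficient map `ℤ → ℝ` on cochains. -/
def intToReal (n : ℕ) : SCochain I M ℤ n →+ SCochain I M ℝ n :=
  AddMonoidHom.mk' (fun c σ => ((c σ : ℤ) : ℝ))
    (by
      intro c c'
      funext σ
      show ((c σ + c' σ : ℤ) : ℝ) = ((c σ : ℤ) : ℝ) + ((c' σ : ℤ) : ℝ)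
      push_cast
      ring)

/-- Degree `n-1` part (with the convention that it is trivial for `n = 0`):
this hosts the middle ("real cochain") component of the Hopkins–Singer complex. -/
def hCompT : ℕ → Type
  | 0 => PUnit
  | (m + 1) => SCochain I M ℝ m

instance : ∀ n, AddCommGroup (hCompT I M n)
  | 0 => inferInstanceAs (AddCommGroup PUnit)
  | (m + 1) => inferInstanceAs (AddCommGroup (SCochain I M ℝ m))

/-- Differential from the `(n-1)`-st level into degree `n`. -/
def hd : ∀ n, hCompT I M n →+ SCochain I M ℝ n
  | 0 => 0
  | (m + 1) => scd I M ℝ m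

variable (Ω : ∀ n : ℕ, AddSubgroup (SCochain I M ℝ n))

/-- The Hopkins–Singer group `DC_s^n(M)`: triples `(c, h, ω)` of an integral `n`-cochain,
a real `(n-1)`-cochain and a differential form `ω` (an element of the de Rham subcomplex
`Ω ⊆ C^•_ℝ`, forms being viewed as real cochains by integration), where `ω = 0` if `n < s`. -/
def DCgrp (s n : ℕ) :
    AddSubgroup (SCochain I M ℤ n × hCompT I M n × SCochain I M ℝ n) where
  carrier := {x | x.2.2 ∈ Ω n ∧ (n < s → x.2.2 = 0)}
  zero_mem' := ⟨(Ω n).zero_mem, fun _ => rfl⟩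
  add_mem' := by
    rintro a b ⟨ha, ha'⟩ ⟨hb, hb'⟩
    exact ⟨(Ω n).add_mem ha hb, fun h => by
      show a.2.2 + b.2.2 = 0
      rw [ha' h, hb' h, add_zero]⟩
  neg_mem' := by
    rintro a ⟨ha, ha'⟩
    refine ⟨(Ω n).neg_mem ha, fun h => ?_⟩
    show -a.2.2 = 0
    rw [ha' h, neg_zero]

/-- The Hopkins–Singer differential `d(c,h,ω) = (dc, ω - c - dh, dω)`. -/
def dDC (hΩ : ∀ n x, x ∈ Ω n → scd I M ℝ n x ∈ Ω (n + 1)) (s n : ℕ) :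
    (DCgrp I M Ω s n) →+ (DCgrp I M Ω s (n + 1)) :=
  AddMonoidHom.mk'
    (fun x => ⟨(scd I M ℤ n x.1.1,
        x.1.2.2 - intToReal I M n x.1.1 - hd I M n x.1.2.1,
        scd I M ℝ n x.1.2.2),
      ⟨hΩ n _ x.2.1, fun h => by
        rw [x.2.2 (Nat.lt_of_succ_lt h)]; exact map_zero _⟩⟩)
    (by
      intro x y
      apply Subtype.ext
      simp only [AddSubgroup.coe_add, Prod.fst_add, Prod.snd_add, map_add, Prod.mk_add_mk,
        Prod.mk.injEq]
      refine ⟨trivial, Prod.ext ?_ rfl⟩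
      simp only [Prod.fst_add]
      abel)

/-- Cohomology at the middle spot of a two-step complex `A → B → C`. -/
def Hq {A B C : Type*} [AddCommGroup A] [AddCommGroup B] [AddCommGroup C]
    (f : A →+ B) (g : B →+ C) : Type _ :=
  g.ker ⧸ ((f.range).addSubgroupOf g.ker)

instance {A B C : Type*} [AddCommGroup A] [AddCommGroup B] [AddCommGroup C]
    (f : A →+ B) (g : B →+ C) : AddCommGroup (Hq f g) :=
  inferInstanceAs (AddCommGroup (_ ⧸ _))

/-- Class of a cocycle in `Hq`. -/
def HqMk {A B C : Type*} [AddCommGroup A] [AddCommGroup B] [AddCommGroup C]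
    (f : A →+ B) (g : B →+ C) (b : B) (hb : b ∈ g.ker) : Hq f g :=
  QuotientAddGroup.mk (⟨b, hb⟩ : g.ker)

/-- Cycles (with the convention `Z_0 = C_0`, everything). -/
def Zcyc : ∀ n : ℕ, AddSubgroup (SChain I M n)
  | 0 => ⊤
  | (m + 1) => (sbd I M m).ker

section Pull

variable {E : Type} [NormedAddCommGroup E] [NormedSpace ℝ E] {H : Type} [TopologicalSpace H]
  (I : ModelWithCorners ℝ E H) (M : Type) [TopologicalSpace M] [ChartedSpace H M]
  {E' : Type} [NormedAddCommGroup E'] [NormedSpace ℝ E'] {H' : Type} [TopologicalSpace H']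
  (J : ModelWithCorners ℝ E' H') (N : Type) [TopologicalSpace N] [ChartedSpace H' N]
  (R : Type) [AddCommGroup R]

/-- Pushforward of a smooth simplex along a smooth map `f : M → N`. -/
def pushSS (f : M → N) (hf : ContMDiff I J (⊤ : ℕ∞) f) {n : ℕ} (σ : SSimplex I M n) :
    SSimplex J N n :=
  ⟨f ∘ σ.toFun, hf.comp_contMDiffOn σ.smooth⟩

/-- Pullback of cochains along a smooth map `f : M → N`. -/
def pullSC (f : M → N) (hf : ContMDiff I J (⊤ : ℕ∞) f) (n : ℕ) :
    SCochain J N R n →+ SCochain I M R n :=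
  AddMonoidHom.mk' (fun c σ => c (pushSS I M J N f hf σ)) (fun _ _ => rfl)

end Pull

section PullT

variable {E : Type} [NormedAddCommGroup E] [NormedSpace ℝ E] {H : Type} [TopologicalSpace H]
  (I : ModelWithCorners ℝ E H) (M : Type) [TopologicalSpace M] [ChartedSpace H M]
  {E' : Type} [NormedAddCommGroup E'] [NormedSpace ℝ E'] {H' : Type} [TopologicalSpace H']
  (J : ModelWithCorners ℝ E' H') (N : Type) [TopologicalSpace N] [ChartedSpace H' N]

/-- Pullback on the `(n-1)`-st level component. -/
def pullH (f : M → N) (hf : ContMDiff I J (⊤ : ℕ∞) f) : ∀ n, hCompT J N n →+ hCompT I M n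
  | 0 => 0
  | (m + 1) => pullSC I M J N ℝ f hf m

/-- Pullback on triples `(c, h, ω)` (the ambient group of the Hopkins–Singer groups). -/
def pullT (f : M → N) (hf : ContMDiff I J (⊤ : ℕ∞) f) (n : ℕ) :
    (SCochain J N ℤ n × hCompT J N n × SCochain J N ℝ n) →+
      (SCochain I M ℤ n × hCompT I M n × SCochain I M ℝ n) :=
  AddMonoidHom.mk'
    (fun t => (pullSC I M J N ℤ f hf n t.1, pullH I M J N f hf n t.2.1,
      pullSC I M J N ℝ f hf n t.2.2))
    (by
      intro a b
      simp only [Prod.fst_add, Prod.snd_add, map_add, Prod.mk_add_mk])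

end PullT

section Stmt17

variable {E0 : Type} [NormedAddCommGroup E0] [NormedSpace ℝ E0] {H0 : Type}
  [TopologicalSpace H0] (I0 : ModelWithCorners ℝ E0 H0)
  (G0 : Type) [TopologicalSpace G0] [ChartedSpace H0 G0]
  {E1 : Type} [NormedAddCommGroup E1] [NormedSpace ℝ E1] {H1 : Type}
  [TopologicalSpace H1] (I1 : ModelWithCorners ℝ E1 H1)
  (G1 : Type) [TopologicalSpace G1] [ChartedSpace H1 G1]
  {E2 : Type} [NormedAddCommGroup E2] [NormedSpace ℝ E2] {H2 : Type}
  [TopologicalSpace H2] (I2 : ModelWithCorners ℝ E2 H2)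
  (G2 : Type) [TopologicalSpace G2] [ChartedSpace H2 G2]
  {E3 : Type} [NormedAddCommGroup E3] [NormedSpace ℝ E3] {H3 : Type}
  [TopologicalSpace H3] (I3 : ModelWithCorners ℝ E3 H3)
  (G3 : Type) [TopologicalSpace G3] [ChartedSpace H3 G3]
  -- the face maps of (a truncation of) the nerve of the Lie groupoid `Γ_• = (Γ_1 ⇉ Γ_0)`,
  -- with `Γ_q = G q`:
  (f1 : Fin 2 → G1 → G0) (hf1 : ∀ i, ContMDiff I1 I0 (⊤ : ℕ∞) (f1 i))
  (f2 : Fin 3 → G2 → G1) (hf2 : ∀ i, ContMDiff I2 I1 (⊤ : ℕ∞) (f2 i))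
  (f3 : Fin 4 → G3 → G2) (hf3 : ∀ i, ContMDiff I3 I2 (⊤ : ℕ∞) (f3 i))

/-- The simplicial differential `δ = ∂_0^* - ∂_1^*` on triples, level `0 → 1`. -/
def δT01 (n : ℕ) :
    (SCochain I0 G0 ℤ n × hCompT I0 G0 n × SCochain I0 G0 ℝ n) →+
      (SCochain I1 G1 ℤ n × hCompT I1 G1 n × SCochain I1 G1 ℝ n) :=
  pullT I1 G1 I0 G0 (f1 0) (hf1 0) n - pullT I1 G1 I0 G0 (f1 1) (hf1 1) n

/-- The simplicial differential `δ = ∑ (-1)^i ∂_i^*` on triples, level `1 → 2`. -/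
def δT12 (n : ℕ) :
    (SCochain I1 G1 ℤ n × hCompT I1 G1 n × SCochain I1 G1 ℝ n) →+
      (SCochain I2 G2 ℤ n × hCompT I2 G2 n × SCochain I2 G2 ℝ n) :=
  ∑ i : Fin 3, (-1 : ℤ) ^ (i : ℕ) • pullT I2 G2 I1 G1 (f2 i) (hf2 i) n

/-- The simplicial differential on triples, level `2 → 3`. -/
def δT23 (n : ℕ) :
    (SCochain I2 G2 ℤ n × hCompT I2 G2 n × SCochain I2 G2 ℝ n) →+
      (SCochain I3 G3 ℤ n × hCompT I3 G3 n × SCochain I3 G3 ℝ n) :=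
  ∑ i : Fin 4, (-1 : ℤ) ^ (i : ℕ) • pullT I3 G3 I2 G2 (f3 i) (hf3 i) n

/-- The simplicial differential `δ` on integral cochains, level `0 → 1`. -/
def δZ01 (n : ℕ) : SCochain I0 G0 ℤ n →+ SCochain I1 G1 ℤ n :=
  pullSC I1 G1 I0 G0 ℤ (f1 0) (hf1 0) n - pullSC I1 G1 I0 G0 ℤ (f1 1) (hf1 1) n

/-- The simplicial differential `δ` on integral cochains, level `1 → 2`. -/
def δZ12 (n : ℕ) : SCochain I1 G1 ℤ n →+ SCochain I2 G2 ℤ n :=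
  ∑ i : Fin 3, (-1 : ℤ) ^ (i : ℕ) • pullSC I2 G2 I1 G1 ℤ (f2 i) (hf2 i) n

/-- The simplicial differential `δ` on integral cochains, level `2 → 3`. -/
def δZ23 (n : ℕ) : SCochain I2 G2 ℤ n →+ SCochain I3 G3 ℤ n :=
  ∑ i : Fin 4, (-1 : ℤ) ^ (i : ℕ) • pullSC I3 G3 I2 G2 ℤ (f3 i) (hf3 i) n

/-!
The projection `(c, h, ω) ↦ c` commutes with the total differentials, so it induces a map on `H²`;
it is bijective by two diagram chases that only involve real cochains (`d` is the singular
coboundary, `δ` the alternating sum of pullbacks along the face maps, `Ω` the forms).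

Injectivity: if `(c, h, ω)` is a cocycle whose integral part is `D u`, the real cochains
`(h₀ + u₀, h₁ - u₁)` satisfy `d h₀ ∈ Ω`, `d h₁ + δ h₀ ∈ Ω` and `δ h₁ = 0`. De Rham on `Γ₀` writes
`h₀ = α + d b` with `α` a form; then `g = h₁ + δ b` has `d g` a form, so `g` is a smooth function
with `δ g = 0`, and the vanishing of differentiable cohomology gives `g = δ y`. Then `k = y - b`
satisfies `h₀ + d k ∈ Ω` and `δ k = h₁`, which is exactly a preimage under `D`.

Surjectivity: for an integral cocycle `(c₀, c₁, c₂)`, de Rham on `Γ₀` and `Γ₁` gives `b`, `b₁`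
with `c₀ - d b` and `c₁ - δ b - d b₁` forms; the remaining defect `c₂ + δ b₁` is then a smooth
`δ`-closed function on `Γ₂`, hence equal to `δ y`, and `(h₀, h₁) = (-b, y - b₁)` completes `c` to
a cocycle of `DC_1`.
-/

theorem Hq.exists_addEquiv_of_lifts {A B C A' B' C' : Type*} [AddCommGroup A] [AddCommGroup B]
    [AddCommGroup C] [AddCommGroup A'] [AddCommGroup B'] [AddCommGroup C']
    {f : A →+ B} {g : B →+ C} {f' : A' →+ B'} {g' : B' →+ C'}
    (πB : B →+ B') (hf : ∀ a, πB (f a) ∈ f'.range) (hg : ∀ b, g b = 0 → g' (πB b) = 0)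
    (hrange : ∀ b, g b = 0 → πB b ∈ f'.range → b ∈ f.range)
    (hlift : ∀ b', g' b' = 0 → ∃ b, g b = 0 ∧ πB b = b') :
    ∃ e : Hq f g ≃+ Hq f' g', ∀ b (hb : b ∈ g.ker) (hb' : πB b ∈ g'.ker),
      e (HqMk f g b hb) = HqMk f' g' (πB b) hb' := by
  let P : g.ker →+ g'.ker := (πB.comp g.ker.subtype).codRestrict _ fun b => hg b b.2
  let e : Hq f g →+ Hq f' g' := QuotientAddGroup.map _ _ P <| by
    rintro b ⟨a, ha⟩
    obtain ⟨a', ha'⟩ := hf a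
    exact ⟨a', ha'.trans (congrArg πB ha)⟩
  have he : ∀ b (hb : b ∈ g.ker), e (HqMk f g b hb) = HqMk f' g' (πB b) (hg b hb) :=
    fun _ _ => rfl
  have hinj : Function.Injective e := by
    refine (injective_iff_map_eq_zero e).mpr fun x => QuotientAddGroup.induction_on x ?_
    rintro ⟨b, hb⟩ h
    have h' := AddSubgroup.mem_addSubgroupOf.mp ((QuotientAddGroup.eq_zero_iff _).mp h)
    exact (QuotientAddGroup.eq_zero_iff _).mpr
      (AddSubgroup.mem_addSubgroupOf.mpr (hrange b hb h'))
  have hsurj : Function.Surjective e := by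
    intro y
    induction y using QuotientAddGroup.induction_on with
    | H b' =>
      obtain ⟨b, hb, hbb'⟩ := hlift b' b'.2
      exact ⟨HqMk f g b hb, (he b hb).trans (congrArg _ (Subtype.ext hbb'))⟩
  exact ⟨AddEquiv.ofBijective e ⟨hinj, hsurj⟩, fun b hb _ => he b hb⟩

theorem Fin.alternating_double_sum_eq_zero {G : Type*} [AddCommGroup G] {n : ℕ}
    (x : Fin (n + 3) → Fin (n + 2) → G)
    (hx : ∀ i j : Fin (n + 2), i ≤ j → x j.succ i = x i.castSucc j) :
    ∑ a : Fin (n + 3), (-1 : ℤ) ^ (a : ℕ) • ∑ b : Fin (n + 2), (-1 : ℤ) ^ (b : ℕ) • x a b = 0 := by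
  simp_rw [Finset.smul_sum, smul_smul, ← pow_add]
  rw [← Finset.sum_product']
  -- the term at `(i.castSucc, j)` cancels the one at `(j.succ, i)` whenever `i ≤ j`
  let g : Fin (n + 3) × Fin (n + 2) → Fin (n + 3) × Fin (n + 2) := fun p =>
    if h : (p.1 : ℕ) ≤ p.2 then (p.2.succ, ⟨p.1, by omega⟩)
    else (p.2.castSucc, ⟨p.1 - 1, by omega⟩)
  have hg : ∀ p, g (g p) = p := by
    rintro ⟨⟨a, ha⟩, ⟨b, hb⟩⟩
    by_cases hab : a ≤ b
    · simp [g, hab, show ¬ b + 1 ≤ a by omega]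
    · simp [g, hab, show b ≤ a - 1 by omega]
      omega
  refine Finset.sum_involution (fun p _ => g p) (fun ⟨a, b⟩ _ => ?_) (fun ⟨a, b⟩ _ _ => ?_)
    (fun _ _ => Finset.mem_univ _) (fun p _ => hg p)
  · have key : ∀ (i j : Fin (n + 2)), i ≤ j →
        (-1 : ℤ) ^ ((i.castSucc : ℕ) + j) • x i.castSucc j +
          (-1 : ℤ) ^ ((j.succ : ℕ) + i) • x j.succ i = 0 := by
      intro i j hij
      rw [hx i j hij, Fin.val_succ, Fin.val_castSucc, ← add_smul]
      rw [show (j : ℕ) + 1 + i = i + j + 1 by ring, pow_succ]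
      simp
    by_cases hab : (a : ℕ) ≤ b
    · have ha : (⟨a, by omega⟩ : Fin (n + 2)).castSucc = a := rfl
      simpa [g, hab, ha] using key ⟨a, by omega⟩ b hab
    · have ha : (⟨a - 1, by omega⟩ : Fin (n + 2)).succ = a := Fin.ext (by simp; omega)
      rw [add_comm]
      simpa [g, hab, ha] using key b ⟨a - 1, by omega⟩ (by simp only [Fin.le_def]; omega)
  · by_cases hab : (a : ℕ) ≤ b <;> simp [g, hab, Prod.ext_iff, Fin.ext_iff] <;> omega

def FaceIdentities {X Y Z : Type*} {k : ℕ} (f : Fin (k + 2) → Y → Z) (g : Fin (k + 3) → X → Y) :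
    Prop :=
  ∀ i j : Fin (k + 2), i ≤ j → f i ∘ g j.succ = f j ∘ g i.castSucc

theorem faceIdentities_of_fin_two {X Y Z : Type*} {f : Fin 2 → Y → Z} {g : Fin 3 → X → Y}
    (h00 : f 0 ∘ g 1 = f 0 ∘ g 0) (h01 : f 0 ∘ g 2 = f 1 ∘ g 0) (h11 : f 1 ∘ g 2 = f 1 ∘ g 1) :
    FaceIdentities f g := by
  intro i j hij
  fin_cases i <;> fin_cases j <;> first | assumption | exact absurd hij (by decide)

theorem faceIdentities_of_fin_three {X Y Z : Type*} {f : Fin 3 → Y → Z} {g : Fin 4 → X → Y}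
    (h00 : f 0 ∘ g 1 = f 0 ∘ g 0) (h01 : f 0 ∘ g 2 = f 1 ∘ g 0) (h02 : f 0 ∘ g 3 = f 2 ∘ g 0)
    (h11 : f 1 ∘ g 2 = f 1 ∘ g 1) (h12 : f 1 ∘ g 3 = f 2 ∘ g 1) (h22 : f 2 ∘ g 3 = f 2 ∘ g 2) :
    FaceIdentities f g := by
  intro i j hij
  fin_cases i <;> fin_cases j <;> first | assumption | exact absurd hij (by decide)

theorem Fin.succAbove_succAbove_of_le {n : ℕ} {i j : Fin (n + 2)} (h : i ≤ j) (k : Fin (n + 1)) :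
    j.succ.succAbove (i.succAbove k) = i.castSucc.succAbove (j.succAbove k) := by
  simpa [SimplexCategory.δ] using
    congrArg (fun f => f.toOrderHom k) (SimplexCategory.δ_comp_δ h)

theorem faceLM_single (n : ℕ) (i : Fin (n + 2)) (k : Fin (n + 1)) (t : ℝ) :
    faceLM n i (Pi.single k t) = Pi.single (i.succAbove k) t := by
  funext j
  rw [faceLM_apply, Finset.sum_eq_single k (fun l _ hl => by simp [hl]) (by simp)]
  simp [Pi.single_apply, eq_comm]

theorem faceLM_comp_faceLM {n : ℕ} {i j : Fin (n + 2)} (h : i ≤ j) :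
    faceLM (n + 1) j.succ ∘ₗ faceLM n i = faceLM (n + 1) i.castSucc ∘ₗ faceLM n j := by
  refine LinearMap.pi_ext fun k t => ?_
  simp [faceLM_single, Fin.succAbove_succAbove_of_le h]

section Simplices

variable {I M R}

theorem SSimplex.ext {n : ℕ} {σ τ : SSimplex I M n} (h : σ.toFun = τ.toFun) : σ = τ := by
  cases σ; cases τ; cases h; rfl

theorem SSimplex.face_face {n : ℕ} (σ : SSimplex I M (n + 2)) {i j : Fin (n + 2)} (h : i ≤ j) :
    (σ.face j.succ).face i = (σ.face i.castSucc).face j :=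
  SSimplex.ext <| congrArg (σ.toFun ∘ ·) (congrArg DFunLike.coe (faceLM_comp_faceLM h))

theorem scd_apply (n : ℕ) (c : SCochain I M R n) (σ : SSimplex I M (n + 1)) :
    scd I M R n c σ = ∑ i : Fin (n + 2), (-1 : ℤ) ^ (i : ℕ) • c (σ.face i) := rfl

theorem scd_scd (n : ℕ) (c : SCochain I M R n) : scd I M R (n + 1) (scd I M R n c) = 0 :=
  funext fun σ => Fin.alternating_double_sum_eq_zero (fun a b => c ((σ.face a).face b))
    fun _ _ h => congrArg c (σ.face_face h)

theorem intToReal_apply (n : ℕ) (c : SCochain I M ℤ n) (σ : SSimplex I M n) :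
    intToReal I M n c σ = c σ := rfl

theorem intToReal_scd (n : ℕ) (c : SCochain I M ℤ n) :
    intToReal I M (n + 1) (scd I M ℤ n c) = scd I M ℝ n (intToReal I M n c) := by
  funext σ
  simp [intToReal_apply, scd_apply]

end Simplices

section Pullback

variable {I M}
variable {E' : Type} [NormedAddCommGroup E'] [NormedSpace ℝ E'] {H' : Type} [TopologicalSpace H']
  {J : ModelWithCorners ℝ E' H'} {N : Type} [TopologicalSpace N] [ChartedSpace H' N]
  {E'' : Type} [NormedAddCommGroup E''] [NormedSpace ℝ E''] {H'' : Type} [TopologicalSpace H'']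
  {K : ModelWithCorners ℝ E'' H''} {P : Type} [TopologicalSpace P] [ChartedSpace H'' P]

theorem pushSS_pushSS {f : M → N} {g : N → P} (hf : ContMDiff I J (⊤ : ℕ∞) f)
    (hg : ContMDiff J K (⊤ : ℕ∞) g) {n : ℕ} (σ : SSimplex I M n) :
    pushSS J N K P g hg (pushSS I M J N f hf σ) = pushSS I M K P (g ∘ f) (hg.comp hf) σ := rfl

theorem pushSS_face {f : M → N} (hf : ContMDiff I J (⊤ : ℕ∞) f) {n : ℕ}
    (σ : SSimplex I M (n + 1)) (i : Fin (n + 2)) :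
    (pushSS I M J N f hf σ).face i = pushSS I M J N f hf (σ.face i) := rfl

def altPull {k : ℕ} (f : Fin k → M → N) (hf : ∀ i, ContMDiff I J (⊤ : ℕ∞) (f i)) (n : ℕ) :
    SCochain J N R n →+ SCochain I M R n :=
  ∑ i : Fin k, (-1 : ℤ) ^ (i : ℕ) • pullSC I M J N R (f i) (hf i) n

variable {R}

section

variable {k : ℕ} {f : Fin k → M → N} (hf : ∀ i, ContMDiff I J (⊤ : ℕ∞) (f i))

theorem altPull_apply {n : ℕ} (c : SCochain J N R n) (σ : SSimplex I M n) :
    altPull R f hf n c σ = ∑ i : Fin k, (-1 : ℤ) ^ (i : ℕ) • c (pushSS I M J N (f i) (hf i) σ) := by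
  rw [altPull, AddMonoidHom.finsetSum_apply]
  exact Finset.sum_apply σ _ _

theorem altPull_scd (n : ℕ) (c : SCochain J N R n) :
    scd I M R n (altPull R f hf n c) = altPull R f hf (n + 1) (scd J N R n c) := by
  funext σ
  simp only [scd_apply, altPull_apply, Finset.smul_sum, smul_smul, pushSS_face]
  rw [Finset.sum_comm]
  simp only [mul_comm]

theorem intToReal_altPull (n : ℕ) (c : SCochain J N ℤ n) :
    intToReal I M n (altPull ℤ f hf n c) = altPull ℝ f hf n (intToReal J N n c) := by
  funext σ
  simp [intToReal_apply, altPull_apply]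

theorem altPull_mem {ΩM : ∀ n, AddSubgroup (SCochain I M ℝ n)}
    {ΩN : ∀ n, AddSubgroup (SCochain J N ℝ n)}
    (hp : ∀ i n x, x ∈ ΩN n → pullSC I M J N ℝ (f i) (hf i) n x ∈ ΩM n)
    {n : ℕ} {x : SCochain J N ℝ n} (hx : x ∈ ΩN n) : altPull ℝ f hf n x ∈ ΩM n := by
  rw [altPull, AddMonoidHom.finsetSum_apply]
  exact sum_mem fun i _ => zsmul_mem (hp i n x hx) _

end

theorem altPull_two {f : Fin 2 → M → N} (hf : ∀ i, ContMDiff I J (⊤ : ℕ∞) (f i)) (n : ℕ) :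
    altPull R f hf n = pullSC I M J N R (f 0) (hf 0) n - pullSC I M J N R (f 1) (hf 1) n := by
  simp [altPull, Fin.sum_univ_two, sub_eq_add_neg]

theorem altPull_altPull {k : ℕ} {f : Fin (k + 2) → N → P} {g : Fin (k + 3) → M → N}
    (hf : ∀ i, ContMDiff J K (⊤ : ℕ∞) (f i)) (hg : ∀ i, ContMDiff I J (⊤ : ℕ∞) (g i))
    (hfg : FaceIdentities f g) (n : ℕ) (c : SCochain K P R n) :
    altPull R g hg n (altPull R f hf n c) = 0 := by
  funext σ
  simp only [altPull_apply, pushSS_pushSS]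
  refine Fin.alternating_double_sum_eq_zero _ fun i j h => ?_
  congr 1
  exact SSimplex.ext (by simp only [pushSS, hfg i j h])

end Pullback

section TriplePullback

variable {I M}
variable {E' : Type} [NormedAddCommGroup E'] [NormedSpace ℝ E'] {H' : Type} [TopologicalSpace H']
  {J : ModelWithCorners ℝ E' H'} {N : Type} [TopologicalSpace N] [ChartedSpace H' N]

def altPullT {k : ℕ} (f : Fin k → M → N) (hf : ∀ i, ContMDiff I J (⊤ : ℕ∞) (f i)) (n : ℕ) :
    (SCochain J N ℤ n × hCompT J N n × SCochain J N ℝ n) →+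
      (SCochain I M ℤ n × hCompT I M n × SCochain I M ℝ n) :=
  ∑ i : Fin k, (-1 : ℤ) ^ (i : ℕ) • pullT I M J N (f i) (hf i) n

variable {k : ℕ} {f : Fin k → M → N} (hf : ∀ i, ContMDiff I J (⊤ : ℕ∞) (f i))

theorem altPullT_fst {n : ℕ} (t : SCochain J N ℤ n × hCompT J N n × SCochain J N ℝ n) :
    (altPullT f hf n t).1 = altPull ℤ f hf n t.1 := by
  rw [altPullT, AddMonoidHom.finsetSum_apply, Prod.fst_sum, altPull,
    AddMonoidHom.finsetSum_apply]
  rfl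

theorem altPullT_snd_snd {n : ℕ} (t : SCochain J N ℤ n × hCompT J N n × SCochain J N ℝ n) :
    (altPullT f hf n t).2.2 = altPull ℝ f hf n t.2.2 := by
  rw [altPullT, AddMonoidHom.finsetSum_apply, Prod.snd_sum, Prod.snd_sum, altPull,
    AddMonoidHom.finsetSum_apply]
  rfl

theorem altPullT_snd_fst {n : ℕ}
    (t : SCochain J N ℤ (n + 1) × hCompT J N (n + 1) × SCochain J N ℝ (n + 1)) :
    (altPullT f hf (n + 1) t).2.1 = altPull ℝ f hf n t.2.1 := by
  rw [altPullT, AddMonoidHom.finsetSum_apply, Prod.snd_sum, Prod.fst_sum, altPull]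
  exact (AddMonoidHom.finsetSum_apply
    (fun i : Fin k => (-1 : ℤ) ^ (i : ℕ) • pullSC I M J N ℝ (f i) (hf i) n) _ _).symm

theorem altPullT_succ_apply {n : ℕ}
    (t : SCochain J N ℤ (n + 1) × hCompT J N (n + 1) × SCochain J N ℝ (n + 1)) :
    altPullT f hf (n + 1) t =
      (altPull ℤ f hf (n + 1) t.1, altPull ℝ f hf n t.2.1, altPull ℝ f hf (n + 1) t.2.2) :=
  Prod.ext (altPullT_fst hf t) (Prod.ext (altPullT_snd_fst hf t) (altPullT_snd_snd hf t))

theorem altPullT_zero_apply (t : SCochain J N ℤ 0 × hCompT J N 0 × SCochain J N ℝ 0) :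
    altPullT f hf 0 t = (altPull ℤ f hf 0 t.1, PUnit.unit, altPull ℝ f hf 0 t.2.2) :=
  Prod.ext (altPullT_fst hf t) (Prod.ext rfl (altPullT_snd_snd hf t))

end TriplePullback

section DC

variable {I M}

def DCgrp.proj (Ω : ∀ n : ℕ, AddSubgroup (SCochain I M ℝ n)) (s n : ℕ) :
    DCgrp I M Ω s n →+ SCochain I M ℤ n :=
  (AddMonoidHom.fst _ _).comp (DCgrp I M Ω s n).subtype

end DC

section Nerve

variable {I0 G0 I1 G1 I2 G2 I3 G3 f1 hf1 f2 hf2 f3 hf3}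
variable {Ω0 : ∀ n : ℕ, AddSubgroup (SCochain I0 G0 ℝ n)}
  {Ω1 : ∀ n : ℕ, AddSubgroup (SCochain I1 G1 ℝ n)}
  {Ω2 : ∀ n : ℕ, AddSubgroup (SCochain I2 G2 ℝ n)}

theorem exists_primitive_mod_forms_two
    (hΩ0 : ∀ n x, x ∈ Ω0 n → scd I0 G0 ℝ n x ∈ Ω0 (n + 1))
    (hp1 : ∀ i n x, x ∈ Ω0 n → pullSC I1 G1 I0 G0 ℝ (f1 i) (hf1 i) n x ∈ Ω1 n)
    (hDR0 : ∀ a : SCochain I0 G0 ℝ 1, scd I0 G0 ℝ 1 a ∈ Ω0 2 →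
      ∃ α ∈ Ω0 1, ∃ b, a = α + scd I0 G0 ℝ 0 b)
    (hDR1 : ∀ a : SCochain I1 G1 ℝ 0, scd I1 G1 ℝ 0 a ∈ Ω1 1 → a ∈ Ω1 0)
    (hvan : ∀ x ∈ Ω1 0, altPull ℝ f2 hf2 0 x = 0 → ∃ y ∈ Ω0 0, altPull ℝ f1 hf1 0 y = x)
    (hfg : FaceIdentities f1 f2)
    {h0 : SCochain I0 G0 ℝ 1} {h1 : SCochain I1 G1 ℝ 0} (hdh0 : scd I0 G0 ℝ 1 h0 ∈ Ω0 2)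
    (hdh1 : scd I1 G1 ℝ 0 h1 + altPull ℝ f1 hf1 1 h0 ∈ Ω1 1)
    (hδh1 : altPull ℝ f2 hf2 0 h1 = 0) :
    ∃ k, h0 + scd I0 G0 ℝ 0 k ∈ Ω0 1 ∧ altPull ℝ f1 hf1 0 k = h1 := by
  obtain ⟨α, hα, b, rfl⟩ := hDR0 h0 hdh0
  set g := h1 + altPull ℝ f1 hf1 0 b
  have hg : g ∈ Ω1 0 := by
    refine hDR1 g ?_
    have hdg : scd I1 G1 ℝ 0 g =
        (scd I1 G1 ℝ 0 h1 + altPull ℝ f1 hf1 1 (α + scd I0 G0 ℝ 0 b)) -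
          altPull ℝ f1 hf1 1 α := by
      rw [map_add, map_add, altPull_scd]
      abel
    rw [hdg]
    exact sub_mem hdh1 (altPull_mem hf1 hp1 hα)
  have hδg : altPull ℝ f2 hf2 0 g = 0 := by
    rw [map_add, hδh1, altPull_altPull hf1 hf2 hfg, add_zero]
  obtain ⟨y, hy, hδy⟩ := hvan g hg hδg
  refine ⟨y - b, ?_, ?_⟩
  · have hη : α + scd I0 G0 ℝ 0 b + scd I0 G0 ℝ 0 (y - b) = α + scd I0 G0 ℝ 0 y := by
      rw [map_sub]
      abel
    rw [hη]
    exact add_mem hα (hΩ0 0 y hy)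
  · rw [map_sub, hδy, add_sub_cancel_right]

theorem exists_representative_mod_forms_three
    (hΩ1 : ∀ n x, x ∈ Ω1 n → scd I1 G1 ℝ n x ∈ Ω1 (n + 1))
    (hp1 : ∀ i n x, x ∈ Ω0 n → pullSC I1 G1 I0 G0 ℝ (f1 i) (hf1 i) n x ∈ Ω1 n)
    (hp2 : ∀ i n x, x ∈ Ω1 n → pullSC I2 G2 I1 G1 ℝ (f2 i) (hf2 i) n x ∈ Ω2 n)
    (hDR0 : ∀ a : SCochain I0 G0 ℝ 2, scd I0 G0 ℝ 2 a ∈ Ω0 3 →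
      ∃ α ∈ Ω0 2, ∃ b, a = α + scd I0 G0 ℝ 1 b)
    (hDR1 : ∀ a : SCochain I1 G1 ℝ 1, scd I1 G1 ℝ 1 a ∈ Ω1 2 →
      ∃ α ∈ Ω1 1, ∃ b, a = α + scd I1 G1 ℝ 0 b)
    (hDR2 : ∀ a : SCochain I2 G2 ℝ 0, scd I2 G2 ℝ 0 a ∈ Ω2 1 → a ∈ Ω2 0)
    (hvan : ∀ x ∈ Ω2 0, altPull ℝ f3 hf3 0 x = 0 → ∃ y ∈ Ω1 0, altPull ℝ f2 hf2 0 y = x)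
    (hfg₁ : FaceIdentities f1 f2) (hfg₂ : FaceIdentities f2 f3)
    {c0 : SCochain I0 G0 ℝ 2} {c1 : SCochain I1 G1 ℝ 1} {c2 : SCochain I2 G2 ℝ 0}
    (hc0 : scd I0 G0 ℝ 2 c0 = 0) (hc1 : altPull ℝ f1 hf1 2 c0 = scd I1 G1 ℝ 1 c1)
    (hc2 : altPull ℝ f2 hf2 1 c1 + scd I2 G2 ℝ 0 c2 = 0) (hc3 : altPull ℝ f3 hf3 0 c2 = 0) :
    ∃ h0 h1, c0 + scd I0 G0 ℝ 1 h0 ∈ Ω0 2 ∧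
      c1 + scd I1 G1 ℝ 0 h1 + altPull ℝ f1 hf1 1 h0 ∈ Ω1 1 ∧ altPull ℝ f2 hf2 0 h1 = c2 := by
  obtain ⟨α, hα, b, hb⟩ := hDR0 c0 (by rw [hc0]; exact zero_mem _)
  have hdc1 : scd I1 G1 ℝ 1 (c1 - altPull ℝ f1 hf1 1 b) = altPull ℝ f1 hf1 2 α := by
    rw [map_sub, altPull_scd, ← hc1, ← map_sub, hb, add_sub_cancel_right]
  obtain ⟨α1, hα1, b1, hb1⟩ := hDR1 _ (hdc1 ▸ altPull_mem hf1 hp1 hα)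
  set g := c2 + altPull ℝ f2 hf2 0 b1
  have hg : g ∈ Ω2 0 := by
    refine hDR2 g ?_
    have hdg : scd I2 G2 ℝ 0 g = -altPull ℝ f2 hf2 1 α1 := by
      rw [map_add, altPull_scd, eq_sub_of_add_eq' hb1.symm, map_sub, map_sub,
        altPull_altPull hf1 hf2 hfg₁, eq_neg_of_add_eq_zero_right hc2]
      abel
    rw [hdg]
    exact neg_mem (altPull_mem hf2 hp2 hα1)
  have hδg : altPull ℝ f3 hf3 0 g = 0 := by
    rw [map_add, hc3, altPull_altPull hf2 hf3 hfg₂, add_zero]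
  obtain ⟨y, hy, hδy⟩ := hvan g hg hδg
  refine ⟨-b, y - b1, ?_, ?_, ?_⟩
  · rwa [map_neg, ← sub_eq_add_neg, hb, add_sub_cancel_right]
  · have hω : c1 + scd I1 G1 ℝ 0 (y - b1) + altPull ℝ f1 hf1 1 (-b) =
        α1 + scd I1 G1 ℝ 0 y := by
      rw [map_sub, map_neg, eq_add_of_sub_eq hb1]
      abel
    rw [hω]
    exact add_mem hα1 (hΩ1 0 y hy)
  · rw [map_sub, hδy, add_sub_cancel_right]

end Nerve

section TotalDifferentials

variable {I0 G0 I1 G1 I2 G2 I3 G3 f1 f2 f3}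
variable {Ω0 : ∀ n : ℕ, AddSubgroup (SCochain I0 G0 ℝ n)}
  {Ω1 : ∀ n : ℕ, AddSubgroup (SCochain I1 G1 ℝ n)}
  {Ω2 : ∀ n : ℕ, AddSubgroup (SCochain I2 G2 ℝ n)}
  {Ω3 : ∀ n : ℕ, AddSubgroup (SCochain I3 G3 ℝ n)}

def IsDCTotalDiff₁ (hΩ0 : ∀ n x, x ∈ Ω0 n → scd I0 G0 ℝ n x ∈ Ω0 (n + 1))
    (hΩ1 : ∀ n x, x ∈ Ω1 n → scd I1 G1 ℝ n x ∈ Ω1 (n + 1))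
    (D1 : (DCgrp I0 G0 Ω0 1 1 × DCgrp I1 G1 Ω1 1 0) →+
      (DCgrp I0 G0 Ω0 1 2 × DCgrp I1 G1 Ω1 1 1 × DCgrp I2 G2 Ω2 1 0)) : Prop :=
  ∀ w,
    (D1 w).1 = dDC I0 G0 Ω0 hΩ0 1 1 w.1 ∧
    ((D1 w).2.1).1 = δT01 I0 G0 I1 G1 f1 hf1 1 w.1.1 - (dDC I1 G1 Ω1 hΩ1 1 0 w.2).1 ∧
    ((D1 w).2.2).1 = δT12 I1 G1 I2 G2 f2 hf2 0 w.2.1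

def IsDCTotalDiff₂ (hΩ0 : ∀ n x, x ∈ Ω0 n → scd I0 G0 ℝ n x ∈ Ω0 (n + 1))
    (hΩ1 : ∀ n x, x ∈ Ω1 n → scd I1 G1 ℝ n x ∈ Ω1 (n + 1))
    (hΩ2 : ∀ n x, x ∈ Ω2 n → scd I2 G2 ℝ n x ∈ Ω2 (n + 1))
    (D2 : (DCgrp I0 G0 Ω0 1 2 × DCgrp I1 G1 Ω1 1 1 × DCgrp I2 G2 Ω2 1 0) →+
      (DCgrp I0 G0 Ω0 1 3 × DCgrp I1 G1 Ω1 1 2 × DCgrp I2 G2 Ω2 1 1 × DCgrp I3 G3 Ω3 1 0)) :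
    Prop :=
  ∀ w,
    (D2 w).1 = dDC I0 G0 Ω0 hΩ0 1 2 w.1 ∧
    ((D2 w).2.1).1 = δT01 I0 G0 I1 G1 f1 hf1 2 w.1.1 - (dDC I1 G1 Ω1 hΩ1 1 1 w.2.1).1 ∧
    ((D2 w).2.2.1).1 =
      δT12 I1 G1 I2 G2 f2 hf2 1 w.2.1.1 + (dDC I2 G2 Ω2 hΩ2 1 0 w.2.2).1 ∧
    ((D2 w).2.2.2).1 = δT23 I2 G2 I3 G3 f3 hf3 0 w.2.2.1

def IsIntTotalDiff₁
    (DZ1 : (SCochain I0 G0 ℤ 1 × SCochain I1 G1 ℤ 0) →+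
      (SCochain I0 G0 ℤ 2 × SCochain I1 G1 ℤ 1 × SCochain I2 G2 ℤ 0)) : Prop :=
  ∀ u,
    (DZ1 u).1 = scd I0 G0 ℤ 1 u.1 ∧
    (DZ1 u).2.1 = δZ01 I0 G0 I1 G1 f1 hf1 1 u.1 - scd I1 G1 ℤ 0 u.2 ∧
    (DZ1 u).2.2 = δZ12 I1 G1 I2 G2 f2 hf2 0 u.2

def IsIntTotalDiff₂
    (DZ2 : (SCochain I0 G0 ℤ 2 × SCochain I1 G1 ℤ 1 × SCochain I2 G2 ℤ 0) →+
      (SCochain I0 G0 ℤ 3 × SCochain I1 G1 ℤ 2 × SCochain I2 G2 ℤ 1 × SCochain I3 G3 ℤ 0)) :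
    Prop :=
  ∀ u,
    (DZ2 u).1 = scd I0 G0 ℤ 2 u.1 ∧
    (DZ2 u).2.1 = δZ01 I0 G0 I1 G1 f1 hf1 2 u.1 - scd I1 G1 ℤ 1 u.2.1 ∧
    (DZ2 u).2.2.1 = δZ12 I1 G1 I2 G2 f2 hf2 1 u.2.1 + scd I2 G2 ℤ 0 u.2.2 ∧
    (DZ2 u).2.2.2 = δZ23 I2 G2 I3 G3 f3 hf3 0 u.2.2

variable {hf1 hf2 hf3}

theorem δT01_eq_altPullT (n : ℕ) : δT01 I0 G0 I1 G1 f1 hf1 n = altPullT f1 hf1 n := by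
  simp [δT01, altPullT, Fin.sum_univ_two, sub_eq_add_neg]

theorem δZ01_eq_altPull (n : ℕ) : δZ01 I0 G0 I1 G1 f1 hf1 n = altPull ℤ f1 hf1 n :=
  (altPull_two hf1 n).symm

variable {hΩ0 : ∀ n x, x ∈ Ω0 n → scd I0 G0 ℝ n x ∈ Ω0 (n + 1)}
  {hΩ1 : ∀ n x, x ∈ Ω1 n → scd I1 G1 ℝ n x ∈ Ω1 (n + 1)}
  {hΩ2 : ∀ n x, x ∈ Ω2 n → scd I2 G2 ℝ n x ∈ Ω2 (n + 1)}

variable {D2 : (DCgrp I0 G0 Ω0 1 2 × DCgrp I1 G1 Ω1 1 1 × DCgrp I2 G2 Ω2 1 0) →+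
      (DCgrp I0 G0 Ω0 1 3 × DCgrp I1 G1 Ω1 1 2 × DCgrp I2 G2 Ω2 1 1 × DCgrp I3 G3 Ω3 1 0)}
  {c0 : SCochain I0 G0 ℤ 2} {h0 : SCochain I0 G0 ℝ 1} {ω0 : SCochain I0 G0 ℝ 2}
  {c1 : SCochain I1 G1 ℤ 1} {h1 : SCochain I1 G1 ℝ 0} {ω1 : SCochain I1 G1 ℝ 1}
  {c2 : SCochain I2 G2 ℤ 0}

theorem IsDCTotalDiff₂.cocycle_conditions_of_apply_mk_eq_zero
    (hD2 : IsDCTotalDiff₂ hf1 hf2 hf3 hΩ0 hΩ1 hΩ2 D2)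
    (hx0 : (c0, h0, ω0) ∈ DCgrp I0 G0 Ω0 1 2) (hx1 : (c1, h1, ω1) ∈ DCgrp I1 G1 Ω1 1 1)
    (hx2 : (c2, PUnit.unit, 0) ∈ DCgrp I2 G2 Ω2 1 0)
    (hw : D2 (⟨_, hx0⟩, ⟨_, hx1⟩, ⟨_, hx2⟩) = 0) :
    (scd I0 G0 ℤ 2 c0 = 0 ∧ altPull ℤ f1 hf1 2 c0 = scd I1 G1 ℤ 1 c1 ∧
        altPull ℤ f2 hf2 1 c1 + scd I2 G2 ℤ 0 c2 = 0 ∧ altPull ℤ f3 hf3 0 c2 = 0) ∧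
      ω0 = intToReal I0 G0 2 c0 + scd I0 G0 ℝ 1 h0 ∧
      ω1 = intToReal I1 G1 1 c1 + scd I1 G1 ℝ 0 h1 + altPull ℝ f1 hf1 1 h0 ∧
      altPull ℝ f2 hf2 0 h1 = intToReal I2 G2 0 c2 := by
  obtain ⟨hA, hB, hC, hE⟩ := hD2 (⟨_, hx0⟩, ⟨_, hx1⟩, ⟨_, hx2⟩)
  rw [hw] at hA hB hC hE
  rw [δT01_eq_altPullT, altPullT_succ_apply] at hB
  rw [δT12, ← altPullT, altPullT_succ_apply] at hC
  rw [δT23, ← altPullT, altPullT_zero_apply] at hE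
  have e0 : scd I0 G0 ℤ 2 c0 = 0 := (congrArg (fun x => x.1.1) hA).symm
  have e1 : ω0 - intToReal I0 G0 2 c0 - scd I0 G0 ℝ 1 h0 = 0 :=
    (congrArg (fun x => x.1.2.1) hA).symm
  have e2 : altPull ℤ f1 hf1 2 c0 - scd I1 G1 ℤ 1 c1 = 0 := (congrArg Prod.fst hB).symm
  have e3 : altPull ℝ f1 hf1 1 h0 - (ω1 - intToReal I1 G1 1 c1 - scd I1 G1 ℝ 0 h1) = 0 :=
    (congrArg (fun x => x.2.1) hB).symm
  have e4 : altPull ℤ f2 hf2 1 c1 + scd I2 G2 ℤ 0 c2 = 0 := (congrArg Prod.fst hC).symm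
  have e5 : altPull ℝ f2 hf2 0 h1 + (0 - intToReal I2 G2 0 c2 - 0) = 0 :=
    (congrArg (fun x => x.2.1) hC).symm
  have e6 : altPull ℤ f3 hf3 0 c2 = 0 := (congrArg Prod.fst hE).symm
  refine ⟨⟨e0, sub_eq_zero.mp e2, e4, e6⟩, ?_, ?_, ?_⟩
  · exact eq_of_sub_eq_zero (by rw [← e1]; abel)
  · exact eq_of_sub_eq_zero (by rw [← neg_eq_zero, ← e3]; abel)
  · exact eq_of_sub_eq_zero (by rw [← e5]; abel)

theorem IsDCTotalDiff₂.apply_mk_eq_zero (hD2 : IsDCTotalDiff₂ hf1 hf2 hf3 hΩ0 hΩ1 hΩ2 D2)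
    (hfg : FaceIdentities f1 f2) (hc0 : scd I0 G0 ℤ 2 c0 = 0)
    (hc1 : altPull ℤ f1 hf1 2 c0 = scd I1 G1 ℤ 1 c1)
    (hc2 : altPull ℤ f2 hf2 1 c1 + scd I2 G2 ℤ 0 c2 = 0) (hc3 : altPull ℤ f3 hf3 0 c2 = 0)
    (hh1 : altPull ℝ f2 hf2 0 h1 = intToReal I2 G2 0 c2)
    (hx0 : (c0, h0, intToReal I0 G0 2 c0 + scd I0 G0 ℝ 1 h0) ∈ DCgrp I0 G0 Ω0 1 2)
    (hx1 : (c1, h1, intToReal I1 G1 1 c1 + scd I1 G1 ℝ 0 h1 + altPull ℝ f1 hf1 1 h0) ∈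
      DCgrp I1 G1 Ω1 1 1)
    (hx2 : (c2, PUnit.unit, 0) ∈ DCgrp I2 G2 Ω2 1 0) :
    D2 (⟨_, hx0⟩, ⟨_, hx1⟩, ⟨_, hx2⟩) = 0 := by
  obtain ⟨hA, hB, hC, hE⟩ := hD2 (⟨_, hx0⟩, ⟨_, hx1⟩, ⟨_, hx2⟩)
  refine Prod.ext (Subtype.ext ?_) (Prod.ext (Subtype.ext ?_)
    (Prod.ext (Subtype.ext ?_) (Subtype.ext ?_)))
  · rw [hA]
    refine Prod.ext hc0 (Prod.ext ?_ ?_)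
    · show intToReal I0 G0 2 c0 + scd I0 G0 ℝ 1 h0 - intToReal I0 G0 2 c0 - scd I0 G0 ℝ 1 h0 = 0
      abel
    · show scd I0 G0 ℝ 2 (intToReal I0 G0 2 c0 + scd I0 G0 ℝ 1 h0) = 0
      rw [map_add, ← intToReal_scd, hc0, scd_scd, map_zero, add_zero]
  · rw [hB, δT01_eq_altPullT, altPullT_succ_apply]
    refine Prod.ext (sub_eq_zero.mpr hc1) (Prod.ext ?_ ?_)
    · show altPull ℝ f1 hf1 1 h0 - (intToReal I1 G1 1 c1 + scd I1 G1 ℝ 0 h1 +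
        altPull ℝ f1 hf1 1 h0 - intToReal I1 G1 1 c1 - scd I1 G1 ℝ 0 h1) = 0
      abel
    · show altPull ℝ f1 hf1 2 (intToReal I0 G0 2 c0 + scd I0 G0 ℝ 1 h0) -
        scd I1 G1 ℝ 1 (intToReal I1 G1 1 c1 + scd I1 G1 ℝ 0 h1 + altPull ℝ f1 hf1 1 h0) = 0
      rw [map_add, map_add, map_add, ← intToReal_altPull, hc1, intToReal_scd, altPull_scd,
        scd_scd]
      abel
  · rw [hC, δT12, ← altPullT, altPullT_succ_apply]
    refine Prod.ext hc2 (Prod.ext ?_ ?_)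
    · show altPull ℝ f2 hf2 0 h1 + (0 - intToReal I2 G2 0 c2 - 0) = 0
      rw [hh1]
      abel
    · show altPull ℝ f2 hf2 1 (intToReal I1 G1 1 c1 + scd I1 G1 ℝ 0 h1 +
        altPull ℝ f1 hf1 1 h0) + scd I2 G2 ℝ 0 0 = 0
      rw [map_add, map_add, ← altPull_scd, hh1, ← intToReal_altPull, ← intToReal_scd,
        ← map_add, hc2, altPull_altPull hf1 hf2 hfg, map_zero, map_zero]
      abel
  · rw [hE, δT23, ← altPullT, altPullT_zero_apply]
    exact Prod.ext hc3 (Prod.ext rfl (map_zero _))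

variable {D1 : (DCgrp I0 G0 Ω0 1 1 × DCgrp I1 G1 Ω1 1 0) →+
      (DCgrp I0 G0 Ω0 1 2 × DCgrp I1 G1 Ω1 1 1 × DCgrp I2 G2 Ω2 1 0)}
  {DZ1 : (SCochain I0 G0 ℤ 1 × SCochain I1 G1 ℤ 0) →+
      (SCochain I0 G0 ℤ 2 × SCochain I1 G1 ℤ 1 × SCochain I2 G2 ℤ 0)}
  {DZ2 : (SCochain I0 G0 ℤ 2 × SCochain I1 G1 ℤ 1 × SCochain I2 G2 ℤ 0) →+
      (SCochain I0 G0 ℤ 3 × SCochain I1 G1 ℤ 2 × SCochain I2 G2 ℤ 1 × SCochain I3 G3 ℤ 0)}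

theorem IsIntTotalDiff₂.apply_eq_zero_iff (hDZ2 : IsIntTotalDiff₂ hf1 hf2 hf3 DZ2)
    (c0 : SCochain I0 G0 ℤ 2) (c1 : SCochain I1 G1 ℤ 1) (c2 : SCochain I2 G2 ℤ 0) :
    DZ2 (c0, c1, c2) = 0 ↔
      scd I0 G0 ℤ 2 c0 = 0 ∧ altPull ℤ f1 hf1 2 c0 = scd I1 G1 ℤ 1 c1 ∧
        altPull ℤ f2 hf2 1 c1 + scd I2 G2 ℤ 0 c2 = 0 ∧ altPull ℤ f3 hf3 0 c2 = 0 := by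
  obtain ⟨e0, e1, e2, e3⟩ := hDZ2 (c0, c1, c2)
  rw [δZ01_eq_altPull] at e1
  simp only [Prod.ext_iff, Prod.fst_zero, Prod.snd_zero, e0, e1, e2, e3, sub_eq_zero]
  rfl

theorem IsIntTotalDiff₁.apply_eq_iff (hDZ1 : IsIntTotalDiff₁ hf1 hf2 DZ1)
    (u0 : SCochain I0 G0 ℤ 1) (u1 : SCochain I1 G1 ℤ 0) (c0 : SCochain I0 G0 ℤ 2)
    (c1 : SCochain I1 G1 ℤ 1) (c2 : SCochain I2 G2 ℤ 0) :
    DZ1 (u0, u1) = (c0, c1, c2) ↔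
      scd I0 G0 ℤ 1 u0 = c0 ∧ altPull ℤ f1 hf1 1 u0 - scd I1 G1 ℤ 0 u1 = c1 ∧
        altPull ℤ f2 hf2 0 u1 = c2 := by
  obtain ⟨e0, e1, e2⟩ := hDZ1 (u0, u1)
  rw [δZ01_eq_altPull] at e1
  simp only [Prod.ext_iff, e0, e1, e2]
  rfl

theorem IsDCTotalDiff₁.proj_apply (hD1 : IsDCTotalDiff₁ hf1 hf2 hΩ0 hΩ1 D1)
    (hDZ1 : IsIntTotalDiff₁ hf1 hf2 DZ1) (v : DCgrp I0 G0 Ω0 1 1 × DCgrp I1 G1 Ω1 1 0) :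
    ((D1 v).1.1.1, (D1 v).2.1.1.1, (D1 v).2.2.1.1) = DZ1 (v.1.1.1, v.2.1.1) := by
  obtain ⟨hA, hB, hC⟩ := hD1 v
  obtain ⟨e0, e1, e2⟩ := hDZ1 (v.1.1.1, v.2.1.1)
  refine Prod.ext ?_ (Prod.ext ?_ ?_)
  · rw [e0, hA]
    rfl
  · rw [e1, hB]
    rfl
  · rw [e2, hC, δT12, ← altPullT, altPullT_fst]
    rfl

theorem IsDCTotalDiff₂.apply_proj_eq_zero (hD2 : IsDCTotalDiff₂ hf1 hf2 hf3 hΩ0 hΩ1 hΩ2 D2)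
    (hDZ2 : IsIntTotalDiff₂ hf1 hf2 hf3 DZ2)
    (w : DCgrp I0 G0 Ω0 1 2 × DCgrp I1 G1 Ω1 1 1 × DCgrp I2 G2 Ω2 1 0) (hw : D2 w = 0) :
    DZ2 (w.1.1.1, w.2.1.1.1, w.2.2.1.1) = 0 := by
  obtain ⟨⟨⟨c0, h0, ω0⟩, hx0⟩, ⟨⟨c1, h1, ω1⟩, hx1⟩, ⟨⟨c2, ⟨⟩, ω2⟩, hx2⟩⟩ := w
  obtain rfl : ω2 = 0 := hx2.2 one_pos
  exact (hDZ2.apply_eq_zero_iff c0 c1 c2).mpr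
    (hD2.cocycle_conditions_of_apply_mk_eq_zero hx0 hx1 hx2 hw).1

theorem IsDCTotalDiff₁.apply_mk_eq (hD1 : IsDCTotalDiff₁ hf1 hf2 hΩ0 hΩ1 D1)
    {u0 : SCochain I0 G0 ℤ 1} {u1 : SCochain I1 G1 ℤ 0} {k : SCochain I0 G0 ℝ 0}
    (hy0 : (u0, k, h0 + intToReal I0 G0 1 u0 + scd I0 G0 ℝ 0 k) ∈ DCgrp I0 G0 Ω0 1 1)
    (hy1 : (u1, PUnit.unit, 0) ∈ DCgrp I1 G1 Ω1 1 0)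
    (hk : altPull ℝ f1 hf1 0 k = h1 - intToReal I1 G1 0 u1)
    (hx0 : (scd I0 G0 ℤ 1 u0, h0, intToReal I0 G0 2 (scd I0 G0 ℤ 1 u0) + scd I0 G0 ℝ 1 h0) ∈
      DCgrp I0 G0 Ω0 1 2)
    (hx1 : (altPull ℤ f1 hf1 1 u0 - scd I1 G1 ℤ 0 u1, h1,
      intToReal I1 G1 1 (altPull ℤ f1 hf1 1 u0 - scd I1 G1 ℤ 0 u1) + scd I1 G1 ℝ 0 h1 +
        altPull ℝ f1 hf1 1 h0) ∈ DCgrp I1 G1 Ω1 1 1)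
    (hx2 : (altPull ℤ f2 hf2 0 u1, PUnit.unit, 0) ∈ DCgrp I2 G2 Ω2 1 0) :
    D1 (⟨_, hy0⟩, ⟨_, hy1⟩) = (⟨_, hx0⟩, ⟨_, hx1⟩, ⟨_, hx2⟩) := by
  obtain ⟨hA, hB, hC⟩ := hD1 (⟨_, hy0⟩, ⟨_, hy1⟩)
  refine Prod.ext (Subtype.ext ?_) (Prod.ext (Subtype.ext ?_) (Subtype.ext ?_))
  · rw [hA]
    refine Prod.ext rfl (Prod.ext ?_ ?_)
    · show h0 + intToReal I0 G0 1 u0 + scd I0 G0 ℝ 0 k - intToReal I0 G0 1 u0 -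
        scd I0 G0 ℝ 0 k = h0
      abel
    · show scd I0 G0 ℝ 1 (h0 + intToReal I0 G0 1 u0 + scd I0 G0 ℝ 0 k) =
        intToReal I0 G0 2 (scd I0 G0 ℤ 1 u0) + scd I0 G0 ℝ 1 h0
      rw [map_add, map_add, scd_scd, add_zero, ← intToReal_scd]
      exact add_comm _ _
  · rw [hB, δT01_eq_altPullT, altPullT_succ_apply]
    refine Prod.ext rfl (Prod.ext ?_ ?_)
    · show altPull ℝ f1 hf1 0 k - (0 - intToReal I1 G1 0 u1 - 0) = h1
      rw [hk]
      abel
    · show altPull ℝ f1 hf1 1 (h0 + intToReal I0 G0 1 u0 + scd I0 G0 ℝ 0 k) - scd I1 G1 ℝ 0 0 =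
        intToReal I1 G1 1 (altPull ℤ f1 hf1 1 u0 - scd I1 G1 ℤ 0 u1) + scd I1 G1 ℝ 0 h1 +
          altPull ℝ f1 hf1 1 h0
      rw [map_add, map_add, ← altPull_scd, hk, map_sub, map_zero, sub_zero,
        ← intToReal_altPull, ← intToReal_scd, map_sub]
      abel
  · rw [hC, δT12, ← altPullT, altPullT_zero_apply]
    exact Prod.ext rfl (Prod.ext rfl (map_zero _))

theorem IsDCTotalDiff₁.mem_range (hD1 : IsDCTotalDiff₁ hf1 hf2 hΩ0 hΩ1 D1)
    (hD2 : IsDCTotalDiff₂ hf1 hf2 hf3 hΩ0 hΩ1 hΩ2 D2) (hDZ1 : IsIntTotalDiff₁ hf1 hf2 DZ1)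
    (hp1 : ∀ i n x, x ∈ Ω0 n → pullSC I1 G1 I0 G0 ℝ (f1 i) (hf1 i) n x ∈ Ω1 n)
    (hDR0 : ∀ a : SCochain I0 G0 ℝ 1, scd I0 G0 ℝ 1 a ∈ Ω0 2 →
      ∃ α ∈ Ω0 1, ∃ b, a = α + scd I0 G0 ℝ 0 b)
    (hDR1 : ∀ a : SCochain I1 G1 ℝ 0, scd I1 G1 ℝ 0 a ∈ Ω1 1 → a ∈ Ω1 0)
    (hvan : ∀ x ∈ Ω1 0, altPull ℝ f2 hf2 0 x = 0 → ∃ y ∈ Ω0 0, altPull ℝ f1 hf1 0 y = x)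
    (hfg : FaceIdentities f1 f2)
    (w : DCgrp I0 G0 Ω0 1 2 × DCgrp I1 G1 Ω1 1 1 × DCgrp I2 G2 Ω2 1 0) (hw : D2 w = 0)
    (hu : (w.1.1.1, w.2.1.1.1, w.2.2.1.1) ∈ DZ1.range) : w ∈ D1.range := by
  obtain ⟨⟨⟨c0, h0, ω0⟩, hx0⟩, ⟨⟨c1, h1, ω1⟩, hx1⟩, ⟨⟨c2, ⟨⟩, ω2⟩, hx2⟩⟩ := w
  obtain rfl : ω2 = 0 := hx2.2 one_pos
  change SCochain I0 G0 ℝ 1 at h0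
  change SCochain I1 G1 ℝ 0 at h1
  obtain ⟨-, rfl, rfl, hh1⟩ := hD2.cocycle_conditions_of_apply_mk_eq_zero hx0 hx1 hx2 hw
  obtain ⟨⟨u0, u1⟩, hu⟩ := hu
  obtain ⟨rfl, rfl, rfl⟩ := (hDZ1.apply_eq_iff u0 u1 c0 c1 c2).mp hu
  -- shifting `(h0, h1)` by the real image of `(u0, u1)` gives a relative cocycle with `c = 0`
  obtain ⟨k, hk, hδk⟩ := exists_primitive_mod_forms_two (h0 := h0 + intToReal I0 G0 1 u0)
    (h1 := h1 - intToReal I1 G1 0 u1) hΩ0 hp1 hDR0 hDR1 hvan hfg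
    (by
      convert hx0.1 using 1
      rw [map_add, ← intToReal_scd]
      exact add_comm _ _)
    (by
      have hω : scd I1 G1 ℝ 0 (h1 - intToReal I1 G1 0 u1) +
          altPull ℝ f1 hf1 1 (h0 + intToReal I0 G0 1 u0) =
          intToReal I1 G1 1 (altPull ℤ f1 hf1 1 u0 - scd I1 G1 ℤ 0 u1) + scd I1 G1 ℝ 0 h1 +
            altPull ℝ f1 hf1 1 h0 := by
        rw [map_sub, map_add, map_sub, intToReal_scd, intToReal_altPull]
        abel
      rw [hω]
      exact hx1.1)
    (by rw [map_sub, hh1, intToReal_altPull, sub_self])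
  exact ⟨_, hD1.apply_mk_eq (hy0 := ⟨hk, by norm_num⟩) (hy1 := ⟨zero_mem _, fun _ => rfl⟩)
    hδk hx0 hx1 hx2⟩

theorem IsDCTotalDiff₂.exists_lift (hD2 : IsDCTotalDiff₂ hf1 hf2 hf3 hΩ0 hΩ1 hΩ2 D2)
    (hDZ2 : IsIntTotalDiff₂ hf1 hf2 hf3 DZ2)
    (hp1 : ∀ i n x, x ∈ Ω0 n → pullSC I1 G1 I0 G0 ℝ (f1 i) (hf1 i) n x ∈ Ω1 n)
    (hp2 : ∀ i n x, x ∈ Ω1 n → pullSC I2 G2 I1 G1 ℝ (f2 i) (hf2 i) n x ∈ Ω2 n)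
    (hDR0 : ∀ a : SCochain I0 G0 ℝ 2, scd I0 G0 ℝ 2 a ∈ Ω0 3 →
      ∃ α ∈ Ω0 2, ∃ b, a = α + scd I0 G0 ℝ 1 b)
    (hDR1 : ∀ a : SCochain I1 G1 ℝ 1, scd I1 G1 ℝ 1 a ∈ Ω1 2 →
      ∃ α ∈ Ω1 1, ∃ b, a = α + scd I1 G1 ℝ 0 b)
    (hDR2 : ∀ a : SCochain I2 G2 ℝ 0, scd I2 G2 ℝ 0 a ∈ Ω2 1 → a ∈ Ω2 0)
    (hvan : ∀ x ∈ Ω2 0, altPull ℝ f3 hf3 0 x = 0 → ∃ y ∈ Ω1 0, altPull ℝ f2 hf2 0 y = x)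
    (hfg₁ : FaceIdentities f1 f2) (hfg₂ : FaceIdentities f2 f3)
    (u : SCochain I0 G0 ℤ 2 × SCochain I1 G1 ℤ 1 × SCochain I2 G2 ℤ 0) (hu : DZ2 u = 0) :
    ∃ w, D2 w = 0 ∧ (w.1.1.1, w.2.1.1.1, w.2.2.1.1) = u := by
  obtain ⟨c0, c1, c2⟩ := u
  obtain ⟨hc0, hc1, hc2, hc3⟩ := (hDZ2.apply_eq_zero_iff c0 c1 c2).mp hu
  obtain ⟨h0, h1, hω0, hω1, hh1⟩ := exists_representative_mod_forms_three hΩ1 hp1 hp2 hDR0 hDR1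
    hDR2 hvan hfg₁ hfg₂ (c0 := intToReal I0 G0 2 c0) (c1 := intToReal I1 G1 1 c1)
    (c2 := intToReal I2 G2 0 c2) (by rw [← intToReal_scd, hc0, map_zero])
    (by rw [← intToReal_altPull, hc1, intToReal_scd])
    (by rw [← intToReal_altPull, ← intToReal_scd, ← map_add, hc2, map_zero])
    (by rw [← intToReal_altPull, hc3, map_zero])
  exact ⟨_, hD2.apply_mk_eq_zero hfg₁ hc0 hc1 hc2 hc3 hh1 ⟨hω0, by norm_num⟩ ⟨hω1, by norm_num⟩
    ⟨zero_mem _, fun _ => rfl⟩, rfl⟩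

end TotalDifferentials

theorem stmt17
    -- simplicial identities for the face maps:
    (hs1 : f1 0 ∘ f2 1 = f1 0 ∘ f2 0) (hs2 : f1 0 ∘ f2 2 = f1 1 ∘ f2 0)
    (hs3 : f1 1 ∘ f2 2 = f1 1 ∘ f2 1)
    (hs4 : f2 0 ∘ f3 1 = f2 0 ∘ f3 0) (hs5 : f2 0 ∘ f3 2 = f2 1 ∘ f3 0)
    (hs6 : f2 0 ∘ f3 3 = f2 2 ∘ f3 0) (hs7 : f2 1 ∘ f3 2 = f2 1 ∘ f3 1)
    (hs8 : f2 1 ∘ f3 3 = f2 2 ∘ f3 1) (hs9 : f2 2 ∘ f3 3 = f2 2 ∘ f3 2)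
    -- de Rham subcomplexes on the nerve:
    (Ω0 : ∀ n : ℕ, AddSubgroup (SCochain I0 G0 ℝ n))
    (Ω1 : ∀ n : ℕ, AddSubgroup (SCochain I1 G1 ℝ n))
    (Ω2 : ∀ n : ℕ, AddSubgroup (SCochain I2 G2 ℝ n))
    (Ω3 : ∀ n : ℕ, AddSubgroup (SCochain I3 G3 ℝ n))
    (hΩ0 : ∀ n x, x ∈ Ω0 n → scd I0 G0 ℝ n x ∈ Ω0 (n + 1))
    (hΩ1 : ∀ n x, x ∈ Ω1 n → scd I1 G1 ℝ n x ∈ Ω1 (n + 1))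
    (hΩ2 : ∀ n x, x ∈ Ω2 n → scd I2 G2 ℝ n x ∈ Ω2 (n + 1))
    -- pullback stability of forms along the face maps:
    (hp1 : ∀ (i) (n) x, x ∈ Ω0 n → pullSC I1 G1 I0 G0 ℝ (f1 i) (hf1 i) n x ∈ Ω1 n)
    (hp2 : ∀ (i) (n) x, x ∈ Ω1 n → pullSC I2 G2 I1 G1 ℝ (f2 i) (hf2 i) n x ∈ Ω2 n)
    -- the de Rham theorem on each manifold `Γ_q`:
    (hDR0 : ∀ (n : ℕ) (a : SCochain I0 G0 ℝ (n + 1)), scd I0 G0 ℝ (n + 1) a ∈ Ω0 (n + 2) →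
      ∃ α ∈ Ω0 (n + 1), ∃ b : SCochain I0 G0 ℝ n, a = α + scd I0 G0 ℝ n b)
    (hDR1 : ∀ (n : ℕ) (a : SCochain I1 G1 ℝ (n + 1)), scd I1 G1 ℝ (n + 1) a ∈ Ω1 (n + 2) →
      ∃ α ∈ Ω1 (n + 1), ∃ b : SCochain I1 G1 ℝ n, a = α + scd I1 G1 ℝ n b)
    (hDR1' : ∀ a : SCochain I1 G1 ℝ 0, scd I1 G1 ℝ 0 a ∈ Ω1 1 → a ∈ Ω1 0)
    (hDR2' : ∀ a : SCochain I2 G2 ℝ 0, scd I2 G2 ℝ 0 a ∈ Ω2 1 → a ∈ Ω2 0)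
    -- vanishing of differentiable cohomology in positive degrees: the complex
    -- `(Ω^0(Γ_•), δ)` of smooth functions on the nerve is exact in positive degrees:
    (hvan1 : ∀ x ∈ Ω1 0,
      (∑ i : Fin 3, (-1 : ℤ) ^ (i : ℕ) • pullSC I2 G2 I1 G1 ℝ (f2 i) (hf2 i) 0) x = 0 →
      ∃ y ∈ Ω0 0,
        pullSC I1 G1 I0 G0 ℝ (f1 0) (hf1 0) 0 y -
          pullSC I1 G1 I0 G0 ℝ (f1 1) (hf1 1) 0 y = x)
    (hvan2 : ∀ x ∈ Ω2 0,
      (∑ i : Fin 4, (-1 : ℤ) ^ (i : ℕ) • pullSC I3 G3 I2 G2 ℝ (f3 i) (hf3 i) 0) x = 0 →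
      ∃ y ∈ Ω1 0,
        (∑ i : Fin 3, (-1 : ℤ) ^ (i : ℕ) • pullSC I2 G2 I1 G1 ℝ (f2 i) (hf2 i) 0) y = x)
    -- the total differentials of the double complex `DC_1^•(Γ_•)`:
    (D1 : (DCgrp I0 G0 Ω0 1 1 × DCgrp I1 G1 Ω1 1 0) →+
      (DCgrp I0 G0 Ω0 1 2 × DCgrp I1 G1 Ω1 1 1 × DCgrp I2 G2 Ω2 1 0))
    (D2 : (DCgrp I0 G0 Ω0 1 2 × DCgrp I1 G1 Ω1 1 1 × DCgrp I2 G2 Ω2 1 0) →+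
      (DCgrp I0 G0 Ω0 1 3 × DCgrp I1 G1 Ω1 1 2 × DCgrp I2 G2 Ω2 1 1 × DCgrp I3 G3 Ω3 1 0))
    (hD1 : ∀ w,
      (D1 w).1 = dDC I0 G0 Ω0 hΩ0 1 1 w.1 ∧
      ((D1 w).2.1).1 = δT01 I0 G0 I1 G1 f1 hf1 1 w.1.1 - (dDC I1 G1 Ω1 hΩ1 1 0 w.2).1 ∧
      ((D1 w).2.2).1 = δT12 I1 G1 I2 G2 f2 hf2 0 w.2.1)
    (hD2 : ∀ w,
      (D2 w).1 = dDC I0 G0 Ω0 hΩ0 1 2 w.1 ∧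
      ((D2 w).2.1).1 = δT01 I0 G0 I1 G1 f1 hf1 2 w.1.1 - (dDC I1 G1 Ω1 hΩ1 1 1 w.2.1).1 ∧
      ((D2 w).2.2.1).1 =
        δT12 I1 G1 I2 G2 f2 hf2 1 w.2.1.1 + (dDC I2 G2 Ω2 hΩ2 1 0 w.2.2).1 ∧
      ((D2 w).2.2.2).1 = δT23 I2 G2 I3 G3 f3 hf3 0 w.2.2.1)
    -- the total differentials of the double complex `C_ℤ^•(Γ_•)`:
    (DZ1 : (SCochain I0 G0 ℤ 1 × SCochain I1 G1 ℤ 0) →+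
      (SCochain I0 G0 ℤ 2 × SCochain I1 G1 ℤ 1 × SCochain I2 G2 ℤ 0))
    (DZ2 : (SCochain I0 G0 ℤ 2 × SCochain I1 G1 ℤ 1 × SCochain I2 G2 ℤ 0) →+
      (SCochain I0 G0 ℤ 3 × SCochain I1 G1 ℤ 2 × SCochain I2 G2 ℤ 1 × SCochain I3 G3 ℤ 0))
    (hDZ1 : ∀ u,
      (DZ1 u).1 = scd I0 G0 ℤ 1 u.1 ∧
      (DZ1 u).2.1 = δZ01 I0 G0 I1 G1 f1 hf1 1 u.1 - scd I1 G1 ℤ 0 u.2 ∧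
      (DZ1 u).2.2 = δZ12 I1 G1 I2 G2 f2 hf2 0 u.2)
    (hDZ2 : ∀ u,
      (DZ2 u).1 = scd I0 G0 ℤ 2 u.1 ∧
      (DZ2 u).2.1 = δZ01 I0 G0 I1 G1 f1 hf1 2 u.1 - scd I1 G1 ℤ 1 u.2.1 ∧
      (DZ2 u).2.2.1 = δZ12 I1 G1 I2 G2 f2 hf2 1 u.2.1 + scd I2 G2 ℤ 0 u.2.2 ∧
      (DZ2 u).2.2.2 = δZ23 I2 G2 I3 G3 f3 hf3 0 u.2.2) :
    -- the projection `(c, h, ω) ↦ c` induces an isomorphism on second total cohomology: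
    ∃ e : Hq D1 D2 ≃+ Hq DZ1 DZ2,
      ∀ (w : DCgrp I0 G0 Ω0 1 2 × DCgrp I1 G1 Ω1 1 1 × DCgrp I2 G2 Ω2 1 0)
        (hw : w ∈ D2.ker)
        (hw' : (w.1.1.1, w.2.1.1.1, w.2.2.1.1) ∈ DZ2.ker),
        e (HqMk D1 D2 w hw) = HqMk DZ1 DZ2 (w.1.1.1, w.2.1.1.1, w.2.2.1.1) hw' := by
  have hfg₁ := faceIdentities_of_fin_two hs1 hs2 hs3
  have hfg₂ := faceIdentities_of_fin_three hs4 hs5 hs6 hs7 hs8 hs9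
  have hvan1' : ∀ x ∈ Ω1 0, altPull ℝ f2 hf2 0 x = 0 → ∃ y ∈ Ω0 0, altPull ℝ f1 hf1 0 y = x :=
    fun x hx hδx => by simpa only [altPull_two, AddMonoidHom.sub_apply] using hvan1 x hx hδx
  obtain ⟨e, he⟩ := Hq.exists_addEquiv_of_lifts
    ((DCgrp.proj Ω0 1 2).prodMap ((DCgrp.proj Ω1 1 1).prodMap (DCgrp.proj Ω2 1 0)))
    (fun v => ⟨_, (IsDCTotalDiff₁.proj_apply hD1 hDZ1 v).symm⟩)
    (IsDCTotalDiff₂.apply_proj_eq_zero hD2 hDZ2)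
    (IsDCTotalDiff₁.mem_range hD1 hD2 hDZ1 hp1 (hDR0 0) hDR1' hvan1' hfg₁)
    (IsDCTotalDiff₂.exists_lift hD2 hDZ2 hp1 hp2 (hDR0 1) (hDR1 0) hDR2' hvan2 hfg₁ hfg₂)
  exact ⟨e, fun w hw hw' => he w hw hw'⟩

end Stmt17

end
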